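/- Let H be a closed pseudocompact subgroup of a Hausdorff topological abelian group G. If the dual group (G/H)_p^∧ of the quotient group G/H contains no nontrivial convergent sequences, then the dual group G_p^∧ contains no nontrivial convergent sequences. -/

import Mathlib

/-!
Put `ψ n := χ n / χ` for a sequence `χ n → χ` in `G_p^∧`. The restrictions of the `ψ n` to `H`
are the coordinates of a continuous homomorphism `H → 𝕋^ℕ`; as `H` is pseudocompact and `𝕋^ℕ`
is metrizable, its image is a compact group `K`. Against Haar measure on `K`, the integrals of
the coordinate characters tend to `μ K ≠ 0` by dominated convergence, while the integral of a
nontrivial character vanishes. So eventually every `ψ n` is trivial on `H` and factors through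
`G/H`; the factored sequence converges to `1` in `(G/H)_p^∧`, hence is eventually constant, and
so is `χ n`.
-/

open Filter Topology Set

/-- The continuous characters of a topological group `G`, as a subset of the product
`Circle ^ G`; the corresponding subtype, with the subspace topology, is the dual group
`G_p^∧` endowed with the topology of pointwise convergence. -/
def pChar (G : Type*) [Group G] [TopologicalSpace G] : Set (G → Circle) :=
  {χ : G → Circle | Continuous χ ∧ ∀ x y : G, χ (x * y) = χ x * χ y}

/-- A sequence is eventually constant if from some index on all its values coincide. -/
def EventuallyConstant {X : Type*} (f : ℕ → X) : Prop :=
  ∃ N : ℕ, ∀ n : ℕ, N ≤ n → f n = f N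

open MeasureTheory

def IsPseudocompact (X : Type*) [TopologicalSpace X] : Prop :=
  ∀ f : X → ℝ, Continuous f → ∃ C : ℝ, ∀ x, |f x| ≤ C

theorem IsPseudocompact.isClosed_range {X Y : Type*} [TopologicalSpace X] [TopologicalSpace Y]
    [TopologicalSpace.MetrizableSpace Y] (hX : IsPseudocompact X) {F : X → Y}
    (hF : Continuous F) : IsClosed (range F) := by
  let := TopologicalSpace.metrizableSpaceMetric Y
  refine closure_subset_iff_isClosed.1 fun p hp => ?_
  by_contra hpF
  have hpos : ∀ x, 0 < dist (F x) p := fun x => dist_pos.2 fun h => hpF ⟨x, h⟩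
  -- `1 / dist (F x) p` is continuous, but unbounded since `p` is in the closure of the range
  obtain ⟨C, hC⟩ := hX _ ((hF.dist continuous_const).inv₀ fun x => (hpos x).ne')
  obtain ⟨_, ⟨x, rfl⟩, hx⟩ := Metric.mem_closure_iff.1 hp (|C| + 1)⁻¹ (by positivity)
  have hlt : |C| + 1 < (dist (F x) p)⁻¹ := by
    rw [dist_comm] at hx
    exact (lt_inv_comm₀ (hpos x) (by positivity)).1 hx
  have hle : (dist (F x) p)⁻¹ ≤ C := (le_abs_self _).trans (hC x)
  linarith [le_abs_self C]

theorem integral_eq_zero_of_map_ne_one {K 𝕜 : Type*} [Group K] [MeasurableSpace K]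
    [MeasurableMul K] [RCLike 𝕜] (μ : Measure K) [μ.IsMulLeftInvariant] (χ : K →* 𝕜) {x₀ : K}
    (hx₀ : χ x₀ ≠ 1) : ∫ x, χ x ∂μ = 0 := by
  have h : χ x₀ * ∫ x, χ x ∂μ = ∫ x, χ x ∂μ := by
    simpa only [map_mul, integral_const_mul] using integral_mul_left_eq_self (μ := μ) (⇑χ) x₀
  refine (mul_eq_zero.1 (?_ : (χ x₀ - 1) * ∫ x, χ x ∂μ = 0)).resolve_left (sub_ne_zero.2 hx₀)
  rw [sub_mul, h, one_mul, sub_self]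

theorem eventually_eq_one_of_tendsto_one {K : Type*} [Group K] [TopologicalSpace K]
    [MeasurableSpace K] [OpensMeasurableSpace K] [MeasurableMul K] (μ : Measure K)
    [IsFiniteMeasure μ] [NeZero μ] [μ.IsMulLeftInvariant]
    (χ : ℕ → K →* Circle) (hχc : ∀ n, Continuous (χ n))
    (hχ : ∀ x, Tendsto (fun n => χ n x) atTop (𝓝 1)) : ∀ᶠ n in atTop, χ n = 1 := by
  have hcoe : Continuous ((↑) : Circle → ℂ) := continuous_subtype_val
  have hint : Tendsto (fun n => ∫ x, (χ n x : ℂ) ∂μ) atTop (𝓝 (∫ _, (1 : ℂ) ∂μ)) :=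
    tendsto_integral_of_dominated_convergence (fun _ => 1)
      (fun n => (hcoe.comp (hχc n)).aestronglyMeasurable) (integrable_const _)
      (fun n => .of_forall fun x => (Circle.norm_coe _).le)
      (.of_forall fun x => (hcoe.tendsto' 1 1 Circle.coe_one).comp (hχ x))
  have hμ : ∫ _, (1 : ℂ) ∂μ ≠ 0 := by simp [integral_const, measureReal_univ_ne_zero]
  filter_upwards [hint.eventually_ne hμ] with n hn
  refine MonoidHom.ext fun x => by_contra fun hx => hn ?_
  exact integral_eq_zero_of_map_ne_one μ (Circle.coeHom.comp (χ n)) (x₀ := x)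
    fun h => hx (Circle.coe_eq_one.1 h)

theorem IsPseudocompact.eventually_eq_one_of_tendsto_one {H : Type*} [Group H]
    [TopologicalSpace H] (hH : IsPseudocompact H) (ψ : ℕ → H →* Circle)
    (hψc : ∀ n, Continuous (ψ n)) (hψ : ∀ x, Tendsto (fun n => ψ n x) atTop (𝓝 1)) :
    ∀ᶠ n in atTop, ψ n = 1 := by
  let F : H →* (ℕ → Circle) := MonoidHom.pi ψ
  let K := F.range
  have hK : IsClosed (K : Set (ℕ → Circle)) := by
    rw [MonoidHom.coe_range]
    exact hH.isClosed_range (continuous_pi hψc)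
  have : CompactSpace K := isCompact_iff_compactSpace.1 hK.isCompact
  borelize ↥K
  let χ n : K →* Circle := (Pi.evalMonoidHom _ n).comp K.subtype
  have hχ : ∀ᶠ n in atTop, χ n = 1 :=
    _root_.eventually_eq_one_of_tendsto_one Measure.haar χ
      (fun n => (continuous_apply n).comp continuous_subtype_val)
      (fun ⟨_, x, hx⟩ => hx ▸ hψ x)
  filter_upwards [hχ] with n hn
  exact MonoidHom.ext fun x => DFunLike.congr_fun hn ⟨F x, x, rfl⟩

theorem Function.Injective.eventuallyConst_comp_iff {α β γ : Type*} {g : β → γ}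
    (hg : Function.Injective g) {f : α → β} {l : Filter α} :
    EventuallyConst (g ∘ f) l ↔ EventuallyConst f l :=
  ⟨fun ⟨s, hs, hss⟩ => ⟨g ⁻¹' s, hs, hss.preimage hg⟩, fun h => h.comp g⟩

theorem Filter.eventuallyConst_comp_add_nat_iff {α : Type*} (f : ℕ → α) (N : ℕ) :
    EventuallyConst (fun k => f (k + N)) atTop ↔ EventuallyConst f atTop := by
  rw [EventuallyConst, ← Function.comp_def, ← map_map, map_add_atTop_eq_nat]; rfl

namespace pChar

variable {G : Type*} [Group G] [TopologicalSpace G]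

noncomputable def toMonoidHom (χ : pChar G) : G →* Circle := MonoidHom.mk' χ.1 χ.2.2

@[simp]
theorem coe_toMonoidHom (χ : pChar G) : ⇑(toMonoidHom χ) = χ := rfl

theorem continuous_toMonoidHom (χ : pChar G) : Continuous (toMonoidHom χ) := χ.2.1

theorem toMonoidHom_injective : Function.Injective (toMonoidHom : pChar G → G →* Circle) :=
  fun _ _ h => Subtype.ext (congrArg DFunLike.coe h)

end pChar

theorem MonoidHom.mem_pChar {G : Type*} [Group G] [TopologicalSpace G] (χ : G →* Circle)
    (hχ : Continuous χ) : ⇑χ ∈ pChar G :=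
  ⟨hχ, map_mul χ⟩

theorem eventuallyConst_of_tendsto_one_of_le_ker {G : Type*} [Group G] [TopologicalSpace G]
    {H : Subgroup G} [H.Normal]
    (hq : ¬ ∃ (f : ℕ → ↥(pChar (G ⧸ H))) (a : ↥(pChar (G ⧸ H))),
        Tendsto f atTop (𝓝 a) ∧ ¬ EventuallyConstant f)
    (ψ : ℕ → G →* Circle) (hψc : ∀ n, Continuous (ψ n)) (hψH : ∀ᶠ n in atTop, H ≤ (ψ n).ker)
    (hψ : ∀ g, Tendsto (fun n => ψ n g) atTop (𝓝 1)) : EventuallyConst ψ atTop := by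
  obtain ⟨N, hN⟩ := eventually_atTop.1 hψH
  let Φ k : pChar (G ⧸ H) := ⟨_, (QuotientGroup.lift H (ψ (k + N)) (hN _ le_add_self)).mem_pChar
    (continuous_quot_lift _ (hψc _))⟩
  have hΦ : Tendsto Φ atTop (𝓝 ⟨_, (1 : G ⧸ H →* Circle).mem_pChar continuous_const⟩) := by
    rw [tendsto_subtype_rng, tendsto_pi_nhds]
    refine fun q => QuotientGroup.induction_on q fun g => ?_
    exact (hψ g).comp (tendsto_add_atTop_nat N)
  obtain ⟨M, hM⟩ : EventuallyConstant Φ := not_not.1 fun h => hq ⟨Φ, _, hΦ, h⟩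
  refine (eventuallyConst_comp_add_nat_iff ψ N).1 (eventuallyConst_atTop.2 ⟨M, fun k hk => ?_⟩)
  exact MonoidHom.ext fun g => congr_fun (congrArg Subtype.val (hM k hk)) (g : G ⧸ H)

theorem stmt_17_general {G : Type*} [CommGroup G] [TopologicalSpace G] (H : Subgroup G)
    (hpsc : ∀ f : ↥H → ℝ, Continuous f → ∃ C : ℝ, ∀ x : ↥H, |f x| ≤ C)
    (hq : ¬ ∃ (f : ℕ → ↥(pChar (G ⧸ H))) (a : ↥(pChar (G ⧸ H))),
        Tendsto f atTop (𝓝 a) ∧ ¬ EventuallyConstant f) :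
    ¬ ∃ (f : ℕ → ↥(pChar G)) (a : ↥(pChar G)),
        Tendsto f atTop (𝓝 a) ∧ ¬ EventuallyConstant f := by
  rintro ⟨f, a, hfa, hnc⟩
  refine hnc (eventuallyConst_atTop.1 ?_)
  let ψ n := pChar.toMonoidHom (f n) / pChar.toMonoidHom a
  have hψc : ∀ n, Continuous (ψ n) := fun n =>
    (pChar.continuous_toMonoidHom (f n)).div' (pChar.continuous_toMonoidHom a)
  have hψ : ∀ g, Tendsto (fun n => ψ n g) atTop (𝓝 1) := fun g => by
    simpa [ψ] using (((continuous_apply g).tendsto _).comp (tendsto_subtype_rng.1 hfa)).div'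
      (tendsto_const_nhds (x := (a : G → Circle) g))
  have hψH : ∀ᶠ n in atTop, H ≤ (ψ n).ker := by
    filter_upwards [IsPseudocompact.eventually_eq_one_of_tendsto_one hpsc
      (fun n => (ψ n).comp H.subtype) (fun n => (hψc n).comp continuous_subtype_val)
      (fun x => hψ x)] with n hn
    rwa [← H.range_subtype, MonoidHom.range_le_ker_iff]
  have hinj : Function.Injective fun χ : pChar G => pChar.toMonoidHom χ / pChar.toMonoidHom a :=
    fun _ _ h => pChar.toMonoidHom_injective (div_left_injective h)
  exact hinj.eventuallyConst_comp_iff.1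
    (eventuallyConst_of_tendsto_one_of_le_ker hq ψ hψc hψH hψ)

/-- Let `H` be a closed pseudocompact subgroup of a Hausdorff topological abelian group
`G`.  If the dual group `(G/H)_p^∧` of the quotient group `G/H` contains no nontrivial
convergent sequence, then neither does the dual group `G_p^∧`. -/
theorem stmt_17 {G : Type*} [CommGroup G] [TopologicalSpace G] [IsTopologicalGroup G]
    [T2Space G] (H : Subgroup G) (hcl : IsClosed (H : Set G))
    (hpsc : ∀ f : ↥H → ℝ, Continuous f → ∃ C : ℝ, ∀ x : ↥H, |f x| ≤ C)
    (hq : ¬ ∃ (f : ℕ → ↥(pChar (G ⧸ H))) (a : ↥(pChar (G ⧸ H))),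
        Tendsto f atTop (𝓝 a) ∧ ¬ EventuallyConstant f) :
    ¬ ∃ (f : ℕ → ↥(pChar G)) (a : ↥(pChar G)),
        Tendsto f atTop (𝓝 a) ∧ ¬ EventuallyConstant f :=
  stmt_17_general H hpsc hq
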